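/- arXiv:1806.05852 — 2 statements merged into one kernel-verified Lean document; each statement's English description precedes it below -/
import Mathlib

section
/- Let N ≥ 1 and let ω^(1),…,ω^(N) and ω̃^(1),…,ω̃^(N) be real numbers satisfying ω_* ≤ ω^(i) ≤ ω^* and ω_* ≤ ω̃^(i) ≤ ω^* for all i, where 0 < ω_* ≤ ω^* < ∞. Set ε := ω_*/ω^*, define the normalised weights w^(i) := ω^(i)/∑_{j=1}^N ω^(j) and w̃^(i) := ω̃^(i)/∑_{j=1}^N ω̃^(j), and let C := {j ∈ {1,…,N} : ω^(j) = ω̃^(j)}. Then ∑_{j∈C} min(w^(j), w̃^(j)) ≥ |C|ε / (|C|ε + N − |C|), where |C| denotes the cardinality of C. -/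
open Finset

/-- **Index-coupled resampling, part (ii).**
If `0 < ω_* ≤ ω^* < ∞`, all the unnormalised weights `ω i`, `ωt i` lie in
`[ω_*, ω^*]`, `ε = ω_*/ω^*`, and `C` is the set of indices on which the two
weight vectors coincide, then the coupling probability
`∑_{j ∈ C} min(w j, w̃ j)` is at least `|C|ε / (|C|ε + N − |C|)`. -/
theorem ccbpf_cres_coupled_set_bound
    (N : ℕ) (hN : 1 ≤ N)
    (ωl ωu : ℝ) (hωl : 0 < ωl) (hωu : ωl ≤ ωu)
    (ω ωt : Fin N → ℝ)
    (hω : ∀ i, ωl ≤ ω i ∧ ω i ≤ ωu)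
    (hωt : ∀ i, ωl ≤ ωt i ∧ ωt i ≤ ωu)
    (C : Finset (Fin N)) (hC : ∀ j, j ∈ C ↔ ω j = ωt j) :
    ((C.card : ℝ) * (ωl / ωu)) /
        ((C.card : ℝ) * (ωl / ωu) + (N : ℝ) - (C.card : ℝ)) ≤
      ∑ j ∈ C, min (ω j / ∑ i, ω i) (ωt j / ∑ i, ωt i) := by
  have hωu0 : 0 < ωu := lt_of_lt_of_le hωl hωu
  set S := ∑ i, ω i with hS
  set St := ∑ i, ωt i with hSt
  set T := ∑ j ∈ C, ω j with hT
  set k := (C.card : ℝ) with hk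
  have hSpos : 0 < S := by
    apply Finset.sum_pos (fun i _ => lt_of_lt_of_le hωl (hω i).1)
    simpa [Finset.univ_nonempty_iff] using Fin.pos_iff_nonempty.mp hN
  have hStpos : 0 < St := by
    apply Finset.sum_pos (fun i _ => lt_of_lt_of_le hωl (hωt i).1)
    simpa [Finset.univ_nonempty_iff] using Fin.pos_iff_nonempty.mp hN
  have hM : 0 < max S St := lt_max_of_lt_left hSpos
  -- the sum equals T / max S St
  have hsum : ∑ j ∈ C, min (ω j / S) (ωt j / St) = T / max S St := by
    rw [hT, Finset.sum_div]
    apply Finset.sum_congr rfl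
    intro j hj
    have hωj : ω j = ωt j := (hC j).mp hj
    have h0 : 0 ≤ ω j := le_of_lt (lt_of_lt_of_le hωl (hω j).1)
    rcases le_total S St with h | h
    · rw [max_eq_right h, ← hωj, min_eq_right]
      gcongr
    · rw [max_eq_left h, ← hωj, min_eq_left]
      gcongr
  rw [hsum]
  have hTk : k * ωl ≤ T := by
    rw [hk, hT]
    calc (C.card : ℝ) * ωl = ∑ _j ∈ C, ωl := by
          rw [Finset.sum_const, nsmul_eq_mul]
      _ ≤ ∑ j ∈ C, ω j := Finset.sum_le_sum (fun j _ => (hω j).1)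
  have hT0 : 0 ≤ T := le_trans (by positivity) hTk
  have hkN : k ≤ (N : ℝ) := by
    rw [hk]
    exact_mod_cast Finset.card_le_card (Finset.subset_univ C) |>.trans_eq
      (by simp)
  -- M ≤ T + (N - k) * ωu
  have hMle : max S St ≤ T + ((N : ℝ) - k) * ωu := by
    have hle : C.card ≤ N := by simpa using Finset.card_le_univ C
    have hcompl : ((N : ℝ) - k) = ((Cᶜ : Finset (Fin N)).card : ℝ) := by
      rw [hk, Finset.card_compl, Fintype.card_fin, Nat.cast_sub hle]
    have hboundS : S ≤ T + ((N : ℝ) - k) * ωu := by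
      rw [hS, hT, ← Finset.sum_add_sum_compl C ω, hcompl]
      gcongr with j hj
      calc ∑ j ∈ Cᶜ, ω j ≤ ∑ _j ∈ Cᶜ, ωu :=
            Finset.sum_le_sum (fun j _ => (hω j).2)
        _ = ((Cᶜ : Finset (Fin N)).card : ℝ) * ωu := by
            rw [Finset.sum_const, nsmul_eq_mul]
    have hboundSt : St ≤ T + ((N : ℝ) - k) * ωu := by
      have hTeq : T = ∑ j ∈ C, ωt j := by
        rw [hT]; exact Finset.sum_congr rfl (fun j hj => (hC j).mp hj)
      rw [hSt, hTeq, ← Finset.sum_add_sum_compl C ωt, hcompl]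
      gcongr with j hj
      calc ∑ j ∈ Cᶜ, ωt j ≤ ∑ _j ∈ Cᶜ, ωu :=
            Finset.sum_le_sum (fun j _ => (hωt j).2)
        _ = ((Cᶜ : Finset (Fin N)).card : ℝ) * ωu := by
            rw [Finset.sum_const, nsmul_eq_mul]
    exact max_le hboundS hboundSt
  have step1 : T / (T + ((N : ℝ) - k) * ωu) ≤ T / max S St := by
    gcongr
  refine le_trans ?_ step1
  -- final algebraic inequality
  have hk0 : 0 ≤ k := by rw [hk]; positivity
  have hNk : 0 ≤ (N : ℝ) - k := by linarith
  have hεωu : ωl / ωu * ωu = ωl := div_mul_cancel₀ ωl (ne_of_gt hωu0)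
  have hD1 : 0 < k * (ωl / ωu) + (N : ℝ) - k := by
    have h1 : (N : ℝ) * ωl ≤ (k * (ωl / ωu) + (N : ℝ) - k) * ωu := by
      have : (k * (ωl / ωu) + (N : ℝ) - k) * ωu
          = k * ωl + ((N : ℝ) - k) * ωu := by
        field_simp; ring
      rw [this]
      nlinarith
    nlinarith [(Nat.one_le_cast.mpr hN : (1:ℝ) ≤ N)]
  have hD2 : 0 < T + ((N : ℝ) - k) * ωu := by
    nlinarith [(Nat.one_le_cast.mpr hN : (1:ℝ) ≤ N)]
  rw [div_le_div_iff₀ hD1 hD2]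
  have hε : 0 < ωl / ωu := by positivity
  nlinarith [mul_nonneg (mul_nonneg hk0 (le_of_lt hωl)) hNk,
    mul_le_mul_of_nonneg_right hTk hNk]
end

section
/- Let X be a measurable space, π a probability measure on X, and h : X → ℝ a bounded measurable function; write h̄ := h − π(h) and ‖h̄‖_∞ := sup_x |h̄(x)|. Let X_b be an X-valued random variable with law μ, let V be a square-integrable real random variable on the same probability space, and set Z_b := h(X_b) + V. Then |Var(Z_b) − Var_{X∼π}(h(X))| ≤ ‖h̄‖_∞² ‖μ − π‖_tv + 2 ‖h̄‖_∞ (E[V²])^{1/2} + E[V²]. -/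
/-!
`Var[Z] = Var[h; μ] + 2 cov[h(X_b), V] + Var[V]`, where the covariance is controlled by
Cauchy–Schwarz and `Var[h; μ] ≤ ‖h̄‖_∞²`, and `Var[V] ≤ E[V²]`. For the remaining term
`Var[h; μ] - Var[h; π]`, express each variance as `∫ (h - t)² - (mean - t)²` for a suitable
centre `t` and test the two measures against the function `(h - t)²`, which oscillates by at
most `(‖h̄‖_∞ + |t - π(h)|)²`. With `t = π(h)` this gives the upper bound. With `t = μ(h)` the
larger oscillation is paid for by the term `-(μ(h) - π(h))²` as long as `‖μ - π‖_tv ≤ 1`; for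
`‖μ - π‖_tv ≥ 1` the bound `Var[h; π] ≤ ‖h̄‖_∞²` suffices.
-/

open MeasureTheory ProbabilityTheory

/-- Total variation distance between two measures:
`sup { |μ(f) − ν(f)| : f measurable, |f| ≤ 1 }` (twice the usual TV). -/
noncomputable def tvDist {X : Type*} [MeasurableSpace X] (μ ν : Measure X) : ℝ :=
  sSup {d : ℝ | ∃ f : X → ℝ, Measurable f ∧ (∀ x, |f x| ≤ 1) ∧
    d = |(∫ x, f x ∂μ) - ∫ x, f x ∂ν|}

section TotalVariation

variable {X : Type*} [MeasurableSpace X]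

lemma abs_integral_sub_integral_le_tvDist (μ ν : Measure X) [IsFiniteMeasure μ]
    [IsFiniteMeasure ν] {f : X → ℝ} (hf : Measurable f) (hf_le : ∀ x, |f x| ≤ 1) :
    |∫ x, f x ∂μ - ∫ x, f x ∂ν| ≤ tvDist μ ν := by
  refine le_csSup ⟨1 * μ.real Set.univ + 1 * ν.real Set.univ, ?_⟩ ⟨f, hf, hf_le, rfl⟩
  rintro _ ⟨g, -, hg_le, rfl⟩
  have hg_norm : ∀ x, ‖g x‖ ≤ 1 := hg_le
  have hμ := norm_integral_le_of_norm_le_const (μ := μ) (ae_of_all _ hg_norm)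
  have hν := norm_integral_le_of_norm_le_const (μ := ν) (ae_of_all _ hg_norm)
  exact (abs_sub _ _).trans (add_le_add hμ hν)

lemma tvDist_nonneg (μ ν : Measure X) [IsFiniteMeasure μ] [IsFiniteMeasure ν] :
    0 ≤ tvDist μ ν :=
  (abs_nonneg _).trans
    (abs_integral_sub_integral_le_tvDist μ ν (f := fun _ ↦ 0) measurable_const fun _ ↦ by simp)

lemma abs_integral_sub_integral_le_mul_tvDist (μ ν : Measure X) [IsProbabilityMeasure μ]
    [IsProbabilityMeasure ν] {f : X → ℝ} (hf : Measurable f) {c r : ℝ}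
    (hf_le : ∀ x, |f x - c| ≤ r) :
    |∫ x, f x ∂μ - ∫ x, f x ∂ν| ≤ r * tvDist μ ν := by
  obtain ⟨x₀⟩ := nonempty_of_isProbabilityMeasure μ
  rcases ((abs_nonneg _).trans (hf_le x₀)).eq_or_lt with rfl | hr
  · have hfc : f = fun _ ↦ c := funext fun x ↦ sub_eq_zero.1 (abs_nonpos_iff.1 (hf_le x))
    simp [hfc]
  have hint : ∀ (ρ : Measure X) [IsProbabilityMeasure ρ], Integrable f ρ := fun ρ _ ↦
    Integrable.of_bound hf.aestronglyMeasurable (|c| + r) (ae_of_all _ fun x ↦ by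
      linarith [Real.norm_eq_abs (f x), abs_sub_abs_le_abs_sub (f x) c, hf_le x])
  have key := abs_integral_sub_integral_le_tvDist μ ν (f := fun x ↦ (f x - c) / r)
    (by fun_prop) fun x ↦ by rw [abs_div, abs_of_pos hr, div_le_one hr]; exact hf_le x
  rw [integral_div, integral_div, integral_sub (hint μ) (integrable_const c),
    integral_sub (hint ν) (integrable_const c), ← sub_div, abs_div, abs_of_pos hr,
    div_le_iff₀ hr] at key
  simpa [mul_comm] using key

lemma abs_integral_sq_sub_le_mul_tvDist (μ ν : Measure X) [IsProbabilityMeasure μ]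
    [IsProbabilityMeasure ν] {g : X → ℝ} (hg : Measurable g) {t R : ℝ}
    (hg_le : ∀ x, |g x - t| ≤ R) :
    |∫ x, (g x - t) ^ 2 ∂μ - ∫ x, (g x - t) ^ 2 ∂ν| ≤ R ^ 2 / 2 * tvDist μ ν := by
  refine abs_integral_sub_integral_le_mul_tvDist μ ν (by fun_prop) (c := R ^ 2 / 2) fun x ↦ ?_
  have hsq : (g x - t) ^ 2 ≤ R ^ 2 := sq_le_sq' (abs_le.1 (hg_le x)).1 (abs_le.1 (hg_le x)).2
  rw [abs_le]
  constructor <;> nlinarith [sq_nonneg (g x - t)]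

end TotalVariation

section Variance

variable {Ω : Type*} [MeasurableSpace Ω] {μ : Measure Ω}

lemma variance_eq_integral_sub_sq_sub_sq [IsProbabilityMeasure μ] {g : Ω → ℝ}
    (hg : MemLp g 2 μ) (t : ℝ) :
    Var[g; μ] = ∫ ω, (g ω - t) ^ 2 ∂μ - (μ[g] - t) ^ 2 := by
  rw [← variance_sub_const hg.aestronglyMeasurable t,
    variance_eq_sub (X := fun ω ↦ g ω - t) (hg.sub (memLp_const t)),
    integral_sub (hg.integrable one_le_two) (integrable_const t)]
  simp

lemma variance_le_sq_of_abs_sub_le [IsProbabilityMeasure μ] {g : Ω → ℝ} (hg : AEMeasurable g μ)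
    {c K : ℝ} (hg_le : ∀ ω, |g ω - c| ≤ K) : Var[g; μ] ≤ K ^ 2 :=
  (variance_le_sq_of_bounded (a := c - K) (b := c + K) (ae_of_all _ fun ω ↦
    ⟨by linarith [(abs_le.1 (hg_le ω)).1], by linarith [(abs_le.1 (hg_le ω)).2]⟩) hg).trans_eq
    (by ring)

lemma abs_covariance_le_sqrt_variance_mul_sqrt_variance [IsFiniteMeasure μ] {Y Z : Ω → ℝ}
    (hY : MemLp Y 2 μ) (hZ : MemLp Z 2 μ) : |cov[Y, Z; μ]| ≤ √Var[Y; μ] * √Var[Z; μ] := by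
  have hquad : ∀ t : ℝ, 0 ≤ Var[Y; μ] * (t * t) + 2 * cov[Y, Z; μ] * t + Var[Z; μ] := by
    intro t
    have h := variance_nonneg (t • Y + Z) μ
    rw [variance_add (hY.const_smul t) hZ, variance_smul, covariance_smul_left] at h
    linarith
  have hdiscrim := discrim_le_zero hquad
  rw [discrim] at hdiscrim
  rw [← Real.sqrt_mul (variance_nonneg Y μ)]
  exact Real.abs_le_sqrt (by linarith)

end Variance

theorem abs_variance_sub_variance_le_mul_tvDist {X : Type*} [MeasurableSpace X]
    (μ π : Measure X) [IsProbabilityMeasure μ] [IsProbabilityMeasure π] {g : X → ℝ}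
    (hg : Measurable g) {K : ℝ} (hK : ∀ x, |g x - π[g]| ≤ K) :
    |Var[g; μ] - Var[g; π]| ≤ K ^ 2 * tvDist μ π := by
  have hs := tvDist_nonneg μ π
  have hg₂ : ∀ (ρ : Measure X) [IsProbabilityMeasure ρ], MemLp g 2 ρ := fun ρ _ ↦
    MemLp.of_bound hg.aestronglyMeasurable (|π[g]| + K) (ae_of_all _ fun x ↦ by
      linarith [Real.norm_eq_abs (g x), abs_sub_abs_le_abs_sub (g x) π[g], hK x])
  have hupper : Var[g; μ] - Var[g; π] ≤ K ^ 2 * tvDist μ π := by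
    have hdiff := abs_le.1 (abs_integral_sq_sub_le_mul_tvDist μ π hg hK)
    rw [variance_eq_integral_sub_sq_sub_sq (hg₂ μ) π[g],
      variance_eq_integral_sub_sq_sub_sq (hg₂ π) π[g], sub_self]
    nlinarith [sq_nonneg (μ[g] - π[g]), mul_nonneg (sq_nonneg K) hs]
  have hlower : Var[g; π] - Var[g; μ] ≤ K ^ 2 * tvDist μ π := by
    rcases le_total 1 (tvDist μ π) with hs₁ | hs₁
    · have hπ := variance_le_sq_of_abs_sub_le (μ := π) hg.aemeasurable hK
      nlinarith [variance_nonneg g μ, sq_nonneg K]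
    set d := |μ[g] - π[g]|
    have hR : ∀ x, |g x - μ[g]| ≤ K + d := fun x ↦
      (abs_sub_le (g x) π[g] μ[g]).trans (add_le_add (hK x) (abs_sub_comm π[g] μ[g]).le)
    have hdiff := abs_le.1 (abs_integral_sq_sub_le_mul_tvDist μ π hg hR)
    rw [variance_eq_integral_sub_sq_sub_sq (hg₂ μ) μ[g],
      variance_eq_integral_sub_sq_sub_sq (hg₂ π) μ[g], sub_self]
    have hd : (π[g] - μ[g]) ^ 2 = d ^ 2 := by rw [sq_abs]; ring
    nlinarith [mul_nonneg hs (sq_nonneg (K - d)), mul_nonneg (sub_nonneg.2 hs₁) (sq_nonneg d)]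
  exact abs_sub_le_iff.2 ⟨hupper, hlower⟩

/-- **Lemma C.2 of the CCBPF paper (abstract form).**
If `Xb` has law `μ`, `V` is square integrable and `Z_b = h(Xb) + V`, then
`|Var(Z_b) − Var_{X∼π}(h(X))| ≤ ‖h̄‖_∞² ‖μ − π‖_tv + 2‖h̄‖_∞ (E[V²])^{1/2} + E[V²]`
where `h̄ = h − π(h)`. -/
theorem ccbpf_variance_comparison
    {X : Type*} [MeasurableSpace X]
    (π : Measure X) [IsProbabilityMeasure π]
    (h : X → ℝ) (hmeas : Measurable h) (hbdd : ∃ M : ℝ, ∀ x, |h x| ≤ M)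
    {Ω : Type*} [MeasurableSpace Ω] (P : Measure Ω) [IsProbabilityMeasure P]
    (Xb : Ω → X) (hXb : Measurable Xb)
    (μ : Measure X) (hμ : P.map Xb = μ)
    (V : Ω → ℝ) (hV : MemLp V 2 P) :
    |variance (fun ω => h (Xb ω) + V ω) P -
        ((∫ x, h x ^ 2 ∂π) - (∫ x, h x ∂π) ^ 2)| ≤
      (⨆ x : X, |h x - ∫ x', h x' ∂π|) ^ 2 * tvDist μ π +
        2 * (⨆ x : X, |h x - ∫ x', h x' ∂π|) * Real.sqrt (∫ ω, V ω ^ 2 ∂P) +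
        ∫ ω, V ω ^ 2 ∂P := by
  obtain ⟨M, hM⟩ := hbdd
  have : IsProbabilityMeasure μ := hμ ▸ Measure.isProbabilityMeasure_map hXb.aemeasurable
  set K := ⨆ x : X, |h x - ∫ x', h x' ∂π|
  have hK : ∀ x, |h x - π[h]| ≤ K := le_ciSup ⟨M + |π[h]|, by
    rintro _ ⟨x, rfl⟩
    linarith [abs_sub (h x) π[h], hM x]⟩
  have hK₀ : 0 ≤ K := Real.iSup_nonneg fun _ ↦ abs_nonneg _
  have hπ₂ : MemLp h 2 π := MemLp.of_bound hmeas.aestronglyMeasurable M (ae_of_all _ hM)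
  have hP₂ : MemLp (fun ω ↦ h (Xb ω)) 2 P :=
    MemLp.of_bound (hmeas.comp hXb).aestronglyMeasurable M (ae_of_all _ fun ω ↦ hM (Xb ω))
  have hlaw : Var[fun ω ↦ h (Xb ω); P] = Var[h; μ] := by
    rw [← hμ, variance_map hmeas.aemeasurable hXb.aemeasurable]
    rfl
  have hVvar : Var[V; P] ≤ ∫ ω, V ω ^ 2 ∂P := variance_le_expectation_sq hV.aestronglyMeasurable
  have hcov : |cov[fun ω ↦ h (Xb ω), V; P]| ≤ K * √(∫ ω, V ω ^ 2 ∂P) :=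
    (abs_covariance_le_sqrt_variance_mul_sqrt_variance hP₂ hV).trans <| mul_le_mul
      (Real.sqrt_le_iff.2 ⟨hK₀, hlaw ▸ variance_le_sq_of_abs_sub_le hmeas.aemeasurable hK⟩)
      (Real.sqrt_le_sqrt hVvar)
      (Real.sqrt_nonneg _) hK₀
  have hvar := abs_le.1 (abs_variance_sub_variance_le_mul_tvDist μ π hmeas hK)
  have hπ : (∫ x, h x ^ 2 ∂π) - (∫ x, h x ∂π) ^ 2 = Var[h; π] :=
    (variance_eq_sub hπ₂).symm
  rw [hπ, variance_fun_add hP₂ hV, hlaw, abs_le]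
  constructor <;> linarith [abs_le.1 hcov, variance_nonneg V P]
end
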